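/- Let L be a supersolvable line arrangement (over any field) with a modular point p of multiplicity m, and suppose q is a crossing point of multiplicity n > m. Then L consists exactly of the m lines through p and the n lines through q (so m + n − 1 lines in total). -/

import Mathlib

open Projectivization

/-- The projective plane over `K`, with points (and, dually, lines) given by
projectivizing `K^3`. -/
abbrev PP (K : Type*) [Field K] := Projectivization K (Fin 3 → K)

/-- Incidence: the point `p` lies on the line `l` (given by dual coordinates):
the dot product of (any) homogeneous coordinates vanishes. -/
def incid {K : Type*} [Field K] (p l : PP K) : Prop :=
  dotProduct p.rep l.rep = 0

/-- The multiplicity of a point `p` with respect to a line arrangement `L`: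
the number of lines of `L` passing through `p`. -/
noncomputable def mult {K : Type*} [Field K] (L : Set (PP K)) (p : PP K) : ℕ :=
  {l ∈ L | incid p l}.ncard

/-- `p` is a crossing point of the arrangement `L`. -/
def crossing {K : Type*} [Field K] (L : Set (PP K)) (p : PP K) : Prop :=
  2 ≤ mult L p

/-- `p` is a modular point of `L`: a crossing point such that for every other
crossing point `q`, some line of `L` passes through both `p` and `q`. -/
def modular {K : Type*} [Field K] (L : Set (PP K)) (p : PP K) : Prop :=
  crossing L p ∧ ∀ q, crossing L q → q ≠ p → ∃ l ∈ L, incid p l ∧ incid q l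

/-- `t_k`: the number of crossing points of `L` of multiplicity exactly `k`. -/
noncomputable def tk {K : Type*} [Field K] (L : Set (PP K)) (k : ℕ) : ℕ :=
  {p | mult L p = k}.ncard

/-- A pencil: all lines pass through one common point. -/
def isPencil {K : Type*} [Field K] (L : Set (PP K)) : Prop :=
  ∃ p, ∀ l ∈ L, incid p l

/-- A near pencil: an arrangement of `s ≥ 3` lines, exactly `s - 1` of which
are concurrent. -/
def isNearPencil {K : Type*} [Field K] (L : Set (PP K)) : Prop :=
  3 ≤ L.ncard ∧ ∃ p, {l ∈ L | incid p l}.ncard + 1 = L.ncard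

/-! If a line `l` of `L` missed both `p` and `q`, the `n` lines through `q` would meet `l` in `n`
distinct points, each a crossing point other than `p`. By modularity each of them is joined to `p`
by a line of `L`, and these `n` lines through `p` are distinct because `p ∉ l`; this contradicts
`m < n`. So `L` is the union of the two pencils at `p` and `q`, which share only the line `pq`. -/

open scoped LinearAlgebra.Projectivization

theorem Projectivization.eq_cross_of_orthogonal {F : Type*} [Field F] [DecidableEq F]
    {v w x : ℙ F (Fin 3 → F)} (hvw : v ≠ w) (hxv : x.orthogonal v) (hxw : x.orthogonal w) :
    x = cross v w := by
  induction v with | h v hv =>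
  induction w with | h w hw =>
  induction x with | h x hx =>
  rw [orthogonal_mk] at hxv hxw
  rw [cross_mk_of_ne hv hw hvw, mk_eq_mk_iff_crossProduct_eq_zero,
    cross_cross_eq_smul_sub_smul', hxw, dotProduct_comm, hxv, zero_smul, zero_smul, sub_zero]

section
variable {K : Type*} [Field K]

theorem incid_iff_orthogonal {x l : PP K} : incid x l ↔ x.orthogonal l := by
  conv_rhs => rw [← x.mk_rep, ← l.mk_rep]
  rfl

variable [DecidableEq K]

-- Incidence is orthogonality, so `cross` is both the meet of two lines and the join of two points.

theorem cross_incid_left {l l' : PP K} (h : l ≠ l') : incid (cross l l') l :=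
  incid_iff_orthogonal.2 (cross_orthogonal_left h)

theorem cross_incid_right {l l' : PP K} (h : l ≠ l') : incid (cross l l') l' :=
  incid_iff_orthogonal.2 (cross_orthogonal_right h)

theorem incid_cross_left {x y : PP K} (h : x ≠ y) : incid x (cross x y) :=
  incid_iff_orthogonal.2 (orthogonal_cross_left h)

theorem incid_cross_right {x y : PP K} (h : x ≠ y) : incid y (cross x y) :=
  incid_iff_orthogonal.2 (orthogonal_cross_right h)

theorem point_eq_cross {x l l' : PP K} (h : l ≠ l') (hl : incid x l) (hl' : incid x l') :
    x = cross l l' :=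
  eq_cross_of_orthogonal h (incid_iff_orthogonal.1 hl) (incid_iff_orthogonal.1 hl')

theorem line_eq_cross {x y l : PP K} (h : x ≠ y) (hx : incid x l) (hy : incid y l) :
    l = cross x y :=
  eq_cross_of_orthogonal h (orthogonal_comm.1 (incid_iff_orthogonal.1 hx))
    (orthogonal_comm.1 (incid_iff_orthogonal.1 hy))

end

section
variable {K : Type*} [Field K] {L : Set (PP K)}

theorem crossing_of_incid_of_incid (hfin : L.Finite) {x l l' : PP K} (hl : l ∈ L) (hl' : l' ∈ L)
    (hll' : l ≠ l') (hxl : incid x l) (hxl' : incid x l') : crossing L x := by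
  have hsub : {l, l'} ⊆ {g ∈ L | incid x g} := by
    rintro g (rfl | rfl)
    exacts [⟨hl, hxl⟩, ⟨hl', hxl'⟩]
  have := Set.ncard_le_ncard hsub (hfin.subset fun _ hg => hg.1)
  rwa [Set.ncard_pair hll'] at this

theorem mult_le_mult_of_modular (hfin : L.Finite) {p q l : PP K} (hp : modular L p) (hl : l ∈ L)
    (hpl : ¬ incid p l) (hql : ¬ incid q l) : mult L q ≤ mult L p := by
  classical
  have hne : ∀ {l'}, incid q l' → l ≠ l' := fun hql' hll' => hql (hll' ▸ hql')
  have hpx : ∀ {l'}, incid q l' → p ≠ cross l l' := fun hql' hpx =>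
    hpl (hpx ▸ cross_incid_left (hne hql'))
  refine Set.ncard_le_ncard_of_injOn (fun l' => cross p (cross l l')) ?_ ?_
    (hfin.subset fun _ hg => hg.1)
  · rintro l' ⟨hl', hql'⟩
    obtain ⟨g, hg, hpg, hxg⟩ := hp.2 _
      (crossing_of_incid_of_incid hfin hl hl' (hne hql') (cross_incid_left (hne hql'))
        (cross_incid_right (hne hql'))) (hpx hql').symm
    rw [← line_eq_cross (hpx hql') hpg hxg]
    exact ⟨hg, hpg⟩
  · rintro l₁ ⟨-, hql₁⟩ l₂ ⟨-, hql₂⟩ (hg : cross p (cross l l₁) = cross p (cross l l₂))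
    set g := cross p (cross l l₁)
    have hgl : g ≠ l := fun h => hpl (h ▸ incid_cross_left (hpx hql₁))
    have hx₁ : cross l l₁ = cross g l :=
      point_eq_cross hgl (incid_cross_right (hpx hql₁)) (cross_incid_left (hne hql₁))
    have hx₂ : cross l l₂ = cross g l :=
      point_eq_cross hgl (hg ▸ incid_cross_right (hpx hql₂)) (cross_incid_left (hne hql₂))
    have hqx : q ≠ cross l l₁ := fun h => hql (h ▸ cross_incid_left (hne hql₁))
    rw [line_eq_cross hqx hql₁ (cross_incid_right (hne hql₁)),
      line_eq_cross hqx hql₂ (hx₁ ▸ hx₂ ▸ cross_incid_right (hne hql₂))]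

theorem incid_or_incid_of_modular (hfin : L.Finite) {p q l : PP K} (hp : modular L p)
    (hpq : mult L p < mult L q) (hl : l ∈ L) : incid p l ∨ incid q l := by
  by_contra! h
  exact (mult_le_mult_of_modular hfin hp hl h.1 h.2).not_gt hpq

theorem ncard_add_one_eq_mult_add_mult (hfin : L.Finite) {p q l₀ : PP K} (hpq : p ≠ q)
    (hcover : ∀ l ∈ L, incid p l ∨ incid q l) (hl₀ : l₀ ∈ L) (hpl₀ : incid p l₀)
    (hql₀ : incid q l₀) : L.ncard + 1 = mult L p + mult L q := by
  classical
  have hunion : {l ∈ L | incid p l} ∪ {l ∈ L | incid q l} = L := by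
    ext l
    constructor
    · rintro (⟨hl, -⟩ | ⟨hl, -⟩) <;> exact hl
    · intro hl
      exact (hcover l hl).imp (⟨hl, ·⟩) (⟨hl, ·⟩)
  have hinter : {l ∈ L | incid p l} ∩ {l ∈ L | incid q l} = {l₀} := by
    ext l
    constructor
    · rintro ⟨⟨-, hpl⟩, -, hql⟩
      rw [Set.mem_singleton_iff, line_eq_cross hpq hpl hql, line_eq_cross hpq hpl₀ hql₀]
    · rintro rfl
      exact ⟨⟨hl₀, hpl₀⟩, hl₀, hql₀⟩
  have := Set.ncard_union_add_ncard_inter {l ∈ L | incid p l} {l ∈ L | incid q l}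
    (hfin.subset fun _ hl => hl.1) (hfin.subset fun _ hl => hl.1)
  rwa [hunion, hinter, Set.ncard_singleton] at this

end

/-- if p is modular of multiplicity m and q is a crossing point of
multiplicity n > m, then L consists exactly of the m lines through p together
with the n lines through q, so m + n - 1 lines in all. -/
theorem modular_with_bigger_crossing {K : Type*} [Field K] (L : Set (PP K))
    (hfin : L.Finite) (p q : PP K) (m n : ℕ)
    (hp : modular L p) (hpm : mult L p = m)
    (hq : crossing L q) (hqn : mult L q = n) (hmn : m < n) :
    (∀ l ∈ L, incid p l ∨ incid q l) ∧ L.ncard = m + n - 1 := by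
  subst hpm hqn
  have hpq : p ≠ q := fun h => hmn.ne (congrArg (mult L) h)
  have hcover : ∀ l ∈ L, incid p l ∨ incid q l := fun _ =>
    incid_or_incid_of_modular hfin hp hmn
  obtain ⟨l₀, hl₀, hpl₀, hql₀⟩ := hp.2 q hq hpq.symm
  have := ncard_add_one_eq_mult_add_mult hfin hpq hcover hl₀ hpl₀ hql₀
  exact ⟨hcover, by omega⟩
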